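/- For every integer m ≥ 0, the following identity holds in K[[z]]: z · S^{(ν+2)}_m(z) / S^{(ν+1)}_{m+1}(z) = (Qqz/(Qq−1)) · G_0(z²), where G_m(w) := 1/(1 − b_m w) and, for 0 ≤ i < m, G_i(w) := 1/(1 − b_i w − a_{i+1} w · G_{i+1}(w)), with b_n := Qq^{n+1}/(1 − Qq^{n+1}) and a_n := Q²q^{2n+1}/((1 − Qq^n)(1 − Qq^{n+1})). Equivalently (Theorem 5.1): R_{m,ν+2}(z;q^{−1})/R_{m+1,ν+1}(z;q^{−1}) = (q^{ν+1}z/(q^{ν+1}−1)) · ∑_{n≥0} μ_n^{≤m} z^{2n}, where the μ_n^{≤m} are the coefficients of the finite continued fraction G_0, i.e. the moments of the orthogonal polynomials of type R_I with recurrence data (b, a, λ = 0). -/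

import Mathlib

/-!
The Lommel polynomials are continuants in `w = z²`, i.e. determinants of tridiagonal matrices.
Expanding along the first row instead of the last gives
`S^{(s)}_{k+2} = (w + d_s) S^{(s+1)}_{k+1} - w S^{(s+2)}_k` with `d_s = 1 - Q⁻¹q⁻ˢ`, so the ratios
`d_{j+1} S^{(j+2)}_k / S^{(j+1)}_{k+1}` obey the recursion defining `G_j`: this is exactly because
`b_j = -1/d_{j+1}` and `a_{j+1} = -b_j/d_{j+2}`. Descending from `j = m` to `j = 0` gives
`G_0(z²) = d_1 S^{(2)}_m / S^{(1)}_{m+1}`, and `d_1 = (Qq - 1)/(Qq)`.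
-/

noncomputable section

/-- `K`, the fraction field of `ℚ[q,Q]` (`Q` plays the role of `q^ν`). -/
abbrev K : Type := FractionRing (MvPolynomial (Fin 2) ℚ)

def qv : K := algebraMap (MvPolynomial (Fin 2) ℚ) K (MvPolynomial.X 0)
def Qv : K := algebraMap (MvPolynomial (Fin 2) ℚ) K (MvPolynomial.X 1)

/-- `Spoly s m = S^{(ν+s)}_m(z) = z^m R_{m,ν+s}(z;q⁻¹)`, the renormalized `q`-Lommel
polynomials of Koelink–Swarttouw with base `q⁻¹` and `Q` in place of `q^ν`:
`S_0 = 1`, `S_{-1} = 0` and `S_{m+1} = (z² + 1 − Q⁻¹q^{−m−s}) S_m − z² S_{m−1}`. -/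
def Spoly (s : ℕ) : ℕ → PowerSeries K
  | 0 => 1
  | 1 => PowerSeries.X ^ 2 + PowerSeries.C (1 - Qv⁻¹ * qv⁻¹ ^ s)
  | m + 2 =>
      (PowerSeries.X ^ 2 + PowerSeries.C (1 - Qv⁻¹ * qv⁻¹ ^ (m + 1 + s))) *
          Spoly s (m + 1)
        - PowerSeries.X ^ 2 * Spoly s m

/-- `b_n = Q q^{n+1}/(1 − Q q^{n+1})`. -/
def bSeq (n : ℕ) : K := Qv * qv ^ (n + 1) / (1 - Qv * qv ^ (n + 1))

/-- `a_n = Q² q^{2n+1}/((1 − Q q^n)(1 − Q q^{n+1}))`. -/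
def aSeq (n : ℕ) : K :=
  Qv ^ 2 * qv ^ (2 * n + 1) / ((1 - Qv * qv ^ n) * (1 - Qv * qv ^ (n + 1)))

/-- The levels `G_m, G_{m-1}, …, G_0` of the finite continued fraction, evaluated at
`w = z²`: `contFracG m k = G_{m-k}(z²)` where `G_m(w) = 1/(1 − b_m w)` and
`G_i(w) = 1/(1 − b_i w − a_{i+1} w G_{i+1}(w))`; thus `G_0(z²) = contFracG m m`. -/
def contFracG (m : ℕ) : ℕ → PowerSeries K
  | 0 => (1 - PowerSeries.C (bSeq m) * PowerSeries.X ^ 2)⁻¹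
  | k + 1 =>
      (1 - PowerSeries.C (bSeq (m - k - 1)) * PowerSeries.X ^ 2 -
          PowerSeries.C (aSeq (m - k)) * PowerSeries.X ^ 2 * contFracG m k)⁻¹

open PowerSeries Finset

section Continuant

variable {R : Type*} [CommRing R]

def continuant (x : R) (e : ℕ → R) : ℕ → R
  | 0 => 1
  | 1 => x + e 0
  | n + 2 => (x + e (n + 1)) * continuant x e (n + 1) - x * continuant x e n

theorem continuant_add_two_eq_shift (x : R) (e : ℕ → R) (k : ℕ) :
    continuant x e (k + 2) =
      (x + e 0) * continuant x (fun i => e (i + 1)) (k + 1)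
        - x * continuant x (fun i => e (i + 2)) k := by
  induction k using Nat.twoStepInduction with
  | zero => simp only [continuant]; ring
  | one => simp only [continuant]; ring
  | more k ih₀ ih₁ =>
    rw [continuant.eq_3, ih₀, ih₁, continuant.eq_3 x (fun i => e (i + 1)) (k + 1),
      continuant.eq_3 x (fun i => e (i + 2)) k]
    ring

theorem map_continuant_of_map_eq_zero {S : Type*} [CommRing S] (φ : R →+* S) {x : R}
    (hx : φ x = 0) (e : ℕ → R) (n : ℕ) :
    φ (continuant x e n) = ∏ i ∈ range n, φ (e i) := by
  induction n using Nat.twoStepInduction with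
  | zero => simp [continuant]
  | one => simp [continuant, hx]
  | more n ih₀ ih₁ =>
    rw [continuant, map_sub, map_mul, map_mul, map_add, hx, ih₁, prod_range_succ _ (n + 1)]
    ring

end Continuant

section ContinuedFraction

variable {F : Type*} [Field F]

theorem PowerSeries.inv_mul_eq_of_eq_mul {D P Y : F⟦X⟧} (hD : constantCoeff D ≠ 0)
    (h : P = D * Y) : D⁻¹ * P = Y := by
  rw [h, ← mul_assoc, PowerSeries.inv_mul_cancel _ hD, one_mul]

theorem contFrac_last_mul {b d : F} (hb : b * d = -1) :
    (1 - C b * X ^ 2)⁻¹ * (X ^ 2 + C d) = C d := by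
  have hb' : C b * C d = -1 := by rw [← map_mul, hb, map_neg, map_one]
  refine inv_mul_eq_of_eq_mul (by simp) ?_
  linear_combination (X ^ 2 : F⟦X⟧) * hb'

theorem contFrac_step_mul {b a d d' : F} (hb : b * d = -1) (ha : a * d' = -b)
    {G S S' S'' : F⟦X⟧} (hS : S = (X ^ 2 + C d) * S' - X ^ 2 * S'')
    (hG : G * S' = C d' * S'') :
    (1 - C b * X ^ 2 - C a * X ^ 2 * G)⁻¹ * S = C d * S' := by
  have hb' : C b * C d = -1 := by rw [← map_mul, hb, map_neg, map_one]
  have ha' : C a * C d' = -C b := by rw [← map_mul, ha, map_neg]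
  refine inv_mul_eq_of_eq_mul (by simp) ?_
  linear_combination
    hS + X ^ 2 * (S' - S'') * hb' + C a * C d * X ^ 2 * hG + C d * X ^ 2 * S'' * ha'

end ContinuedFraction

theorem Qv_mul_qv_pow_ne_one (n : ℕ) : Qv * qv ^ n ≠ 1 := by
  intro h
  have h' : algebraMap (MvPolynomial (Fin 2) ℚ) K (MvPolynomial.X 1 * MvPolynomial.X 0 ^ n)
      = algebraMap (MvPolynomial (Fin 2) ℚ) K 1 := by
    rwa [map_mul, map_pow, map_one]
  have := congrArg (MvPolynomial.eval (fun _ => (0 : ℚ)))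
    (IsFractionRing.injective (MvPolynomial (Fin 2) ℚ) K h')
  simp at this

theorem qv_ne_zero : qv ≠ 0 := by
  simp [qv]

theorem Qv_ne_zero : Qv ≠ 0 := by
  simp [Qv]

def lommelDiag (s : ℕ) : K := 1 - Qv⁻¹ * qv⁻¹ ^ s

theorem lommelDiag_eq (s : ℕ) : lommelDiag s = (Qv * qv ^ s - 1) / (Qv * qv ^ s) := by
  have : Qv * qv ^ s ≠ 0 := mul_ne_zero Qv_ne_zero (pow_ne_zero s qv_ne_zero)
  rw [lommelDiag, inv_pow, ← mul_inv, sub_div, div_self this, one_div]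

theorem lommelDiag_ne_zero (s : ℕ) : lommelDiag s ≠ 0 := by
  rw [lommelDiag_eq]
  exact div_ne_zero (sub_ne_zero.mpr (Qv_mul_qv_pow_ne_one s))
    (mul_ne_zero Qv_ne_zero (pow_ne_zero s qv_ne_zero))

theorem bSeq_mul_lommelDiag (j : ℕ) : bSeq j * lommelDiag (j + 1) = -1 := by
  have h := sub_ne_zero.mpr (Qv_mul_qv_pow_ne_one (j + 1)).symm
  rw [bSeq, lommelDiag_eq]
  field_simp [qv_ne_zero, Qv_ne_zero]
  ring

theorem aSeq_succ_mul_lommelDiag (j : ℕ) : aSeq (j + 1) * lommelDiag (j + 2) = -bSeq j := by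
  have h₁ := sub_ne_zero.mpr (Qv_mul_qv_pow_ne_one (j + 1)).symm
  have h₂ := sub_ne_zero.mpr (Qv_mul_qv_pow_ne_one (j + 2)).symm
  rw [aSeq, bSeq, lommelDiag_eq]
  field_simp [qv_ne_zero, Qv_ne_zero]
  ring

theorem Spoly_eq_continuant (s : ℕ) :
    Spoly s = continuant (X ^ 2) (fun i => C (lommelDiag (i + s))) := by
  funext n
  induction n using Nat.twoStepInduction with
  | zero => rfl
  | one => simp [Spoly, continuant, lommelDiag]
  | more n ih₀ ih₁ => rw [Spoly, continuant, ih₀, ih₁]; rfl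

theorem Spoly_add_two (s k : ℕ) :
    Spoly s (k + 2) =
      (X ^ 2 + C (lommelDiag s)) * Spoly (s + 1) (k + 1) - X ^ 2 * Spoly (s + 2) k := by
  simp only [Spoly_eq_continuant, continuant_add_two_eq_shift, zero_add, add_assoc,
    add_comm 1 s, add_comm 2 s]

theorem constantCoeff_Spoly_ne_zero (s n : ℕ) : constantCoeff (Spoly s n) ≠ 0 := by
  rw [Spoly_eq_continuant, map_continuant_of_map_eq_zero _ (by simp)]
  exact prod_ne_zero_iff.mpr fun i _ => by simpa using lommelDiag_ne_zero (i + s)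

theorem contFracG_add_succ (j k : ℕ) :
    contFracG (j + (k + 1)) (k + 1) =
      (1 - C (bSeq j) * X ^ 2 - C (aSeq (j + 1)) * X ^ 2 * contFracG (j + 1 + k) k)⁻¹ := by
  rw [contFracG, show j + (k + 1) - k - 1 = j by omega, show j + (k + 1) - k = j + 1 by omega,
    show j + (k + 1) = j + 1 + k by omega]

theorem contFracG_mul_Spoly (j k : ℕ) :
    contFracG (j + k) k * Spoly (j + 1) (k + 1) = C (lommelDiag (j + 1)) * Spoly (j + 2) k := by
  induction k generalizing j with
  | zero => exact (contFrac_last_mul (bSeq_mul_lommelDiag j)).trans (mul_one _).symm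
  | succ k ih =>
    rw [contFracG_add_succ]
    exact contFrac_step_mul (bSeq_mul_lommelDiag j) (aSeq_succ_mul_lommelDiag j)
      (Spoly_add_two (j + 1) k) (ih (j + 1))

/-- Theorem 5.1 (finite case): for every `m ≥ 0`,
`z R_{m,ν+2}(z;q⁻¹)/R_{m+1,ν+1}(z;q⁻¹) = (Qqz/(Qq−1)) ⬝ G_0(z²)` in `K[[z]]`, i.e.
`R_{m,ν+2}(z;q⁻¹)/R_{m+1,ν+1}(z;q⁻¹) = (q^{ν+1}z/(q^{ν+1}−1)) ∑_{n≥0} μ_n^{≤m} z^{2n}`,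
the generating function of the moments of the orthogonal polynomials of type `R_I`
with data `(b, a, λ = 0)`. -/
theorem lommel_ratio_eq_moments (m : ℕ) :
    PowerSeries.X * Spoly 2 m * (Spoly 1 (m + 1))⁻¹
      = PowerSeries.C (Qv * qv / (Qv * qv - 1)) * PowerSeries.X * contFracG m m := by
  have hG : contFracG m m * Spoly 1 (m + 1) = C (lommelDiag 1) * Spoly 2 m := by
    simpa using contFracG_mul_Spoly 0 m
  have hd : C (Qv * qv / (Qv * qv - 1)) * C (lommelDiag 1) = (1 : K⟦X⟧) := by
    have : Qv * qv - 1 ≠ 0 := sub_ne_zero.mpr (by simpa using Qv_mul_qv_pow_ne_one 1)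
    rw [← map_mul, lommelDiag_eq, pow_one, div_mul_div_comm, mul_comm, div_self, map_one]
    exact mul_ne_zero this (mul_ne_zero Qv_ne_zero qv_ne_zero)
  refine ((eq_mul_inv_iff_mul_eq (constantCoeff_Spoly_ne_zero 1 (m + 1))).mpr ?_).symm
  linear_combination C (Qv * qv / (Qv * qv - 1)) * X * hG + X * Spoly 2 m * hd

end
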